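/- For any ASM program P over ℱ and any states X, Y, if X =_{Γ_P(X)} Y (X and Y agree on the values of all terms in Γ_P(X)), then Γ_P(X) = Γ_P(Y) and Δ⁺_P(X) = Δ⁺_P(Y). -/

import Mathlib

open scoped Classical

/-- Ground terms over a vocabulary `F`: a function symbol applied to a list of terms. -/
inductive GTerm (F : Type) : Type where
  | app : F → List (GTerm F) → GTerm F

/-- The subterm relation on ground terms. -/
inductive Subterm {F : Type} : GTerm F → GTerm F → Prop where
  | refl (t : GTerm F) : Subterm t t
  | arg {s t : GTerm F} {f : F} {args : List (GTerm F)} :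
      t ∈ args → Subterm s t → Subterm s (GTerm.app f args)

/-- A state: a first-order structure over vocabulary `F`, with base set drawn
from a common universe `U`, interpreting every function symbol. -/
structure State (F U : Type) where
  base : Set U
  interp : F → List U → U
  closed : ∀ (f : F) (as : List U), (∀ a ∈ as, a ∈ base) → interp f as ∈ base

mutual
/-- Value of a ground term in a state. -/
def evalT {F U : Type} (X : State F U) : GTerm F → U
  | GTerm.app f args => X.interp f (evalList X args)

/-- Values of a list of ground terms in a state. -/
def evalList {F U : Type} (X : State F U) : List (GTerm F) → List U
  | [] => []
  | t :: ts => evalT X t :: evalList X ts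
end

/-- The interpretation of the nullary symbol `trueS` in state `X`. -/
def tval {F U : Type} (trueS : F) (X : State F U) : U := X.interp trueS []

/-- The interpretation of the nullary symbol `falseS` in state `X`. -/
def fval {F U : Type} (falseS : F) (X : State F U) : U := X.interp falseS []

/-- `X ⊨ C`: the term `C` evaluates in `X` to the interpretation of true. -/
def Holds {F U : Type} (trueS : F) (X : State F U) (C : GTerm F) : Prop :=
  evalT X C = tval trueS X

/-- A location–value pair `f(ā) ↦ b`. -/
abbrev Update (F U : Type) : Type := (F × List U) × U

/-- Two states agree on the values of all terms of `T`. -/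
def AgreeOn {F U : Type} (T : Set (GTerm F)) (X Y : State F U) : Prop :=
  ∀ t ∈ T, evalT X t = evalT Y t

/-- A term takes opposite truth values in `X` and `Y`. -/
def OppVals {F U : Type} (trueS falseS : F) (s : GTerm F) (X Y : State F U) : Prop :=
  (evalT X s = tval trueS X ∧ evalT Y s = fval falseS Y) ∨
  (evalT X s = fval falseS X ∧ evalT Y s = tval trueS Y)

/-- `lt` is a strict partial order whose field is contained in `T`. -/
def StrictOrderOn {F : Type} (T : Set (GTerm F)) (lt : GTerm F → GTerm F → Prop) : Prop :=
  (∀ s t, lt s t → s ∈ T ∧ t ∈ T) ∧ (∀ t, ¬ lt t t) ∧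
  (∀ r s t, lt r s → lt s t → lt r t)

/-- Abstract state machine programs over vocabulary `F`. -/
inductive Prog (F : Type) : Type where
  | assign : F → List (GTerm F) → GTerm F → Prog F
  | par : List (Prog F) → Prog F
  | cond : GTerm F → Prog F → Prog F

mutual
/-- The raw set of updates proposed by an ASM program in a state. -/
def updSet {F U : Type} (trueS : F) : Prog F → State F U → Set (Update F U)
  | Prog.assign f ss t, X => {((f, evalList X ss), evalT X t)}
  | Prog.par Ps, X => updSetList trueS Ps X
  | Prog.cond C P, X => {u | Holds trueS X C ∧ u ∈ updSet trueS P X}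

def updSetList {F U : Type} (trueS : F) : List (Prog F) → State F U → Set (Update F U)
  | [], _ => ∅
  | P :: Ps, X => updSet trueS P X ∪ updSetList trueS Ps X
end

/-- The program proposes two conflicting updates of the same location. -/
def Clash {F U : Type} (trueS : F) (P : Prog F) (X : State F U) : Prop :=
  ∃ l b b', (l, b) ∈ updSet trueS P X ∧ (l, b') ∈ updSet trueS P X ∧ b ≠ b'

/-- The proposed update set `Δ⁺_P(X)`; `none` is `⊥` (a clash). -/
noncomputable def DeltaPlus {F U : Type} (trueS : F) (P : Prog F) (X : State F U) :
    Option (Set (Update F U)) :=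
  if Clash trueS P X then none else some (updSet trueS P X)

/-- The update set `Δ_P(X)` of an ASM program: `⊥` when `Δ⁺` is `∅` or `⊥`,
and otherwise `Δ⁺` with all trivial updates removed. -/
noncomputable def DeltaASM {F U : Type} (trueS : F) (P : Prog F) (X : State F U) :
    Option (Set (Update F U)) :=
  if Clash trueS P X ∨ updSet trueS P X = ∅ then none
  else some {u ∈ updSet trueS P X | X.interp u.1.1 u.1.2 ≠ u.2}

mutual
/-- Raw explore terms of an ASM program in a state (before closing under
subterms and adding true and false). -/
def gamma0 {F U : Type} (trueS : F) : Prog F → State F U → Set (GTerm F)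
  | Prog.assign _ ss t, _ => {x | x ∈ ss} ∪ {t}
  | Prog.par Ps, X => gamma0List trueS Ps X
  | Prog.cond C P, X => {C} ∪ {x | Holds trueS X C ∧ x ∈ gamma0 trueS P X}

def gamma0List {F U : Type} (trueS : F) : List (Prog F) → State F U → Set (GTerm F)
  | [], _ => ∅
  | P :: Ps, X => gamma0 trueS P X ∪ gamma0List trueS Ps X
end

/-- The explore set `Γ_P(X)` of an ASM program: the raw explore terms
together with true and false, closed under subterms. -/
def GammaASM {F U : Type} (trueS falseS : F) (P : Prog F) (X : State F U) : Set (GTerm F) :=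
  {s | ∃ t, (t ∈ gamma0 trueS P X ∨ t = GTerm.app trueS [] ∨ t = GTerm.app falseS []) ∧
    Subterm s t}

/-- The graph of a state, as a set of location–value pairs over its base set. -/
def State.graph {F U : Type} (X : State F U) : Set (Update F U) :=
  {u | (∀ a ∈ u.1.2, a ∈ X.base) ∧ u.2 = X.interp u.1.1 u.1.2}

/-- `ζ` is an isomorphism of `F`-structures from `X` to `Y`. -/
def IsIso {F U : Type} (ζ : U → U) (X Y : State F U) : Prop :=
  Set.BijOn ζ X.base Y.base ∧
  ∀ (f : F) (as : List U), (∀ a ∈ as, a ∈ X.base) →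
    Y.interp f (as.map ζ) = ζ (X.interp f as)

/-- A nested conditional assignment: `if C₁ then if C₂ then ⋯ then A`,
where `A` is an assignment or the empty parallel statement. -/
inductive NestedCondAssign {F : Type} : Prog F → Prop where
  | assign (f : F) (ss : List (GTerm F)) (t : GTerm F) :
      NestedCondAssign (Prog.assign f ss t)
  | skip : NestedCondAssign (Prog.par [])
  | cond {P : Prog F} (C : GTerm F) :
      NestedCondAssign P → NestedCondAssign (Prog.cond C P)

/-- The shared explore terms `Γ(V) = ⋂_{X ∈ V} Γ(X)` of a set of states. -/
def sharedGamma {F U : Type} (Γ : State F U → Set (GTerm F)) (V : Set (State F U)) :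
    Set (GTerm F) :=
  ⋂ X ∈ V, Γ X

/-- `V` is agreeable: all states in `V` agree on the values of all shared explore terms. -/
def Agreeable {F U : Type} (Γ : State F U → Set (GTerm F)) (V : Set (State F U)) : Prop :=
  ∀ X ∈ V, ∀ Y ∈ V, AgreeOn (sharedGamma Γ V) X Y

/-- `V` is uniform: all states in `V` have the same explore set. -/
def Uniform {F U : Type} (Γ : State F U → Set (GTerm F)) (V : Set (State F U)) : Prop :=
  ∀ X ∈ V, ∀ Y ∈ V, Γ X = Γ Y

/-- The Discrimination property of the order `lt` at state `X`: `lt` is a partial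
order on `Γ(X)` and for every state `Y` and every `t ∈ Γ(X) ∖ Γ(Y)` there is an
`s ∈ Γ(X)` with `s ≺_X t` taking opposite truth values in `X` and `Y`. -/
def Discriminates {F U : Type} (trueS falseS : F) (S : Set (State F U))
    (Γ : State F U → Set (GTerm F)) (X : State F U)
    (lt : GTerm F → GTerm F → Prop) : Prop :=
  StrictOrderOn (Γ X) lt ∧
  ∀ Y ∈ S, ∀ t ∈ Γ X \ Γ Y, ∃ s ∈ Γ X, lt s t ∧ OppVals trueS falseS s X Y

/-- An infinite sequence `X₁, X₂, …` of states and `s₁, s₂, …` of terms such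
that for all `i`, `s₁ ≺_{Xᵢ} s₂ ≺_{Xᵢ} ⋯ ≺_{Xᵢ} sᵢ`, where `sᵢ` takes opposite
truth values in `Xᵢ` and `Xⱼ` for every `j > i`. -/
def BadChain {F U : Type} (trueS falseS : F) (S : Set (State F U))
    (lt : State F U → GTerm F → GTerm F → Prop) : Prop :=
  ∃ (Xs : ℕ → State F U) (ss : ℕ → GTerm F),
    (∀ i, Xs i ∈ S) ∧
    (∀ i j, j < i → lt (Xs i) (ss j) (ss (j + 1))) ∧
    (∀ i j, i < j → OppVals trueS falseS (ss i) (Xs i) (Xs j))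

/-! Every guard that `X` evaluates, every argument of an assignment that `X` reaches, and the
term `true` lie in `Γ_P(X)`. If `Y` agrees with `X` on them, then every guard has the same
truth value in `Y`, so `Y` takes the same branches of `P`, explores the same terms, and
evaluates the reached assignments to the same updates. -/

section Agreement

variable {F U : Type} {trueS : F} {X Y : State F U}

theorem AgreeOn.mono {T T' : Set (GTerm F)} (hsub : T' ⊆ T) (h : AgreeOn T X Y) :
    AgreeOn T' X Y :=
  fun t ht => h t (hsub ht)

theorem evalList_eq_map (X : State F U) : ∀ ss : List (GTerm F), evalList X ss = ss.map (evalT X)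
  | [] => rfl
  | s :: ss => by rw [evalList, evalList_eq_map X ss, List.map_cons]

theorem evalList_eq_of_agreeOn {ss : List (GTerm F)} (h : AgreeOn {s | s ∈ ss} X Y) :
    evalList X ss = evalList Y ss := by
  rw [evalList_eq_map, evalList_eq_map]
  exact List.map_congr_left h

theorem holds_iff_of_agree {C : GTerm F} (htrue : tval trueS X = tval trueS Y)
    (hC : evalT X C = evalT Y C) : Holds trueS X C ↔ Holds trueS Y C := by
  rw [Holds, Holds, hC, htrue]

mutual

theorem gamma0_eq_of_agreeOn (htrue : tval trueS X = tval trueS Y) :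
    ∀ P : Prog F, AgreeOn (gamma0 trueS P X) X Y → gamma0 trueS P X = gamma0 trueS P Y
  | Prog.assign _ _ _, _ => rfl
  | Prog.par Ps, h => gamma0List_eq_of_agreeOn htrue Ps h
  | Prog.cond C P, h => by
    have hiff := holds_iff_of_agree htrue (h C (Or.inl rfl))
    by_cases hC : Holds trueS X C
    · have hP := gamma0_eq_of_agreeOn htrue P (h.mono fun t ht => Or.inr ⟨hC, ht⟩)
      simp only [gamma0, hiff, hP]
    · simp only [gamma0, hC, hiff.not.mp hC, false_and, Set.ofPred_false]

theorem gamma0List_eq_of_agreeOn (htrue : tval trueS X = tval trueS Y) :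
    ∀ Ps : List (Prog F), AgreeOn (gamma0List trueS Ps X) X Y →
      gamma0List trueS Ps X = gamma0List trueS Ps Y
  | [], _ => rfl
  | P :: Ps, h => by
    rw [gamma0List, gamma0List,
      gamma0_eq_of_agreeOn htrue P (h.mono Set.subset_union_left),
      gamma0List_eq_of_agreeOn htrue Ps (h.mono Set.subset_union_right)]

end

mutual

theorem updSet_eq_of_agreeOn (htrue : tval trueS X = tval trueS Y) :
    ∀ P : Prog F, AgreeOn (gamma0 trueS P X) X Y → updSet trueS P X = updSet trueS P Y
  | Prog.assign f ss t, h => by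
    rw [updSet, updSet, evalList_eq_of_agreeOn (h.mono Set.subset_union_left),
      h t (Or.inr rfl)]
  | Prog.par Ps, h => updSetList_eq_of_agreeOn htrue Ps h
  | Prog.cond C P, h => by
    have hiff := holds_iff_of_agree htrue (h C (Or.inl rfl))
    by_cases hC : Holds trueS X C
    · have hP := updSet_eq_of_agreeOn htrue P (h.mono fun t ht => Or.inr ⟨hC, ht⟩)
      simp only [updSet, hiff, hP]
    · simp only [updSet, hC, hiff.not.mp hC, false_and, Set.ofPred_false]

theorem updSetList_eq_of_agreeOn (htrue : tval trueS X = tval trueS Y) :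
    ∀ Ps : List (Prog F), AgreeOn (gamma0List trueS Ps X) X Y →
      updSetList trueS Ps X = updSetList trueS Ps Y
  | [], _ => rfl
  | P :: Ps, h => by
    rw [updSetList, updSetList,
      updSet_eq_of_agreeOn htrue P (h.mono Set.subset_union_left),
      updSetList_eq_of_agreeOn htrue Ps (h.mono Set.subset_union_right)]

end

theorem gamma0_subset_gammaASM (falseS : F) (P : Prog F) :
    gamma0 trueS P X ⊆ GammaASM trueS falseS P X :=
  fun t ht => ⟨t, Or.inl ht, Subterm.refl t⟩

theorem tval_eq_of_agreeOn_gammaASM {falseS : F} {P : Prog F}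
    (h : AgreeOn (GammaASM trueS falseS P X) X Y) : tval trueS X = tval trueS Y :=
  h _ ⟨_, Or.inr (Or.inl rfl), Subterm.refl _⟩

theorem gammaASM_eq_of_gamma0_eq {falseS : F} {P : Prog F}
    (h : gamma0 trueS P X = gamma0 trueS P Y) :
    GammaASM trueS falseS P X = GammaASM trueS falseS P Y := by
  rw [GammaASM, GammaASM, h]

theorem deltaPlus_eq_of_updSet_eq {P : Prog F} (h : updSet trueS P X = updSet trueS P Y) :
    DeltaPlus trueS P X = DeltaPlus trueS P Y := by
  rw [DeltaPlus, DeltaPlus, Clash, Clash, h]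

end Agreement

/-- For any ASM program `P` and any states `X`, `Y`: if `X` and `Y` agree on
the values of all terms in `Γ_P(X)`, then `Γ_P(X) = Γ_P(Y)` and
`Δ⁺_P(X) = Δ⁺_P(Y)`. -/
theorem asm_agree_same_explore_and_updates {F U : Type} [Finite F] (trueS falseS : F)
    (P : Prog F) (X Y : State F U)
    (h : AgreeOn (GammaASM trueS falseS P X) X Y) :
    GammaASM trueS falseS P X = GammaASM trueS falseS P Y ∧
    DeltaPlus trueS P X = DeltaPlus trueS P Y := by
  have htrue := tval_eq_of_agreeOn_gammaASM h
  have hraw : AgreeOn (gamma0 trueS P X) X Y := h.mono (gamma0_subset_gammaASM falseS P)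
  exact ⟨gammaASM_eq_of_gamma0_eq (gamma0_eq_of_agreeOn htrue P hraw),
    deltaPlus_eq_of_updSet_eq (updSet_eq_of_agreeOn htrue P hraw)⟩
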